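/- Let ε, c1, c2 ∈ ℝ and let u : ℝ² → ℝ be a C^∞ solution of u_tt − u_xx + ε·u_t = 0 on ℝ². Set w(x,t) = (c1 + ε·(c1·t + c2))·u(x,t), and define T^t = u_t·w_t + u_x·w_x + (1/2)·ε·(u·w_t − u_t·w) and T^x = −u_t·w_x − u_x·w_t + (1/2)·ε·(u_x·w − u·w_x). Then for all (x,t): D_t(T^t) + D_x(T^x) = −2·ε²·(c1·t + c2)·u_t²; in particular (T^t, T^x) is a first-order approximate conserved vector of the damped wave equation. -/

import Mathlib

/-- Partial derivative with respect to the first variable `x`. -/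
noncomputable def pdx (f : ℝ → ℝ → ℝ) : ℝ → ℝ → ℝ := fun x t => deriv (fun y => f y t) x

/-- Partial derivative with respect to the second variable `t`. -/
noncomputable def pdt (f : ℝ → ℝ → ℝ) : ℝ → ℝ → ℝ := fun x t => deriv (fun s => f x s) t

open Function

lemma sectt {f : ℝ → ℝ → ℝ} (hf : ContDiff ℝ (⊤ : ℕ∞) (uncurry f)) (x t : ℝ) :
    DifferentiableAt ℝ (fun s => f x s) t := by
  have h : (fun s => f x s) = uncurry f ∘ (fun s => (x, s)) := rfl
  rw [h]
  exact ((hf.differentiable (by simp)) (x, t)).comp t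
    ((differentiableAt_const x).prodMk differentiableAt_id)

lemma sectx {f : ℝ → ℝ → ℝ} (hf : ContDiff ℝ (⊤ : ℕ∞) (uncurry f)) (x t : ℝ) :
    DifferentiableAt ℝ (fun y => f y t) x := by
  have h : (fun y => f y t) = uncurry f ∘ (fun y => (y, t)) := rfl
  rw [h]
  exact ((hf.differentiable (by simp)) (x, t)).comp x
    (differentiableAt_id.prodMk (differentiableAt_const t))

lemma pdt_eq {f : ℝ → ℝ → ℝ} (hf : ContDiff ℝ (⊤ : ℕ∞) (uncurry f)) (x t : ℝ) :
    pdt f x t = fderiv ℝ (uncurry f) (x, t) (0, 1) := by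
  have h : HasFDerivAt (fun s : ℝ => (x, s))
      ((0 : ℝ →L[ℝ] ℝ).prod (ContinuousLinearMap.id ℝ ℝ)) t :=
    (hasFDerivAt_const x t).prodMk (hasFDerivAt_id t)
  have h2 := ((hf.differentiable (by simp) (x, t)).hasFDerivAt).comp t h
  have h3 : HasDerivAt (fun s => f x s) (fderiv ℝ (uncurry f) (x, t) (0, 1)) t := by
    simpa [Function.comp_def] using h2.hasDerivAt
  exact h3.deriv

lemma pdx_eq {f : ℝ → ℝ → ℝ} (hf : ContDiff ℝ (⊤ : ℕ∞) (uncurry f)) (x t : ℝ) :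
    pdx f x t = fderiv ℝ (uncurry f) (x, t) (1, 0) := by
  have h : HasFDerivAt (fun y : ℝ => (y, t))
      ((ContinuousLinearMap.id ℝ ℝ).prod (0 : ℝ →L[ℝ] ℝ)) x :=
    (hasFDerivAt_id x).prodMk (hasFDerivAt_const t x)
  have h2 := ((hf.differentiable (by simp) (x, t)).hasFDerivAt).comp x h
  have h3 : HasDerivAt (fun y => f y t) (fderiv ℝ (uncurry f) (x, t) (1, 0)) x := by
    simpa [Function.comp_def] using h2.hasDerivAt
  exact h3.deriv

lemma smooth_pdt {f : ℝ → ℝ → ℝ} (hf : ContDiff ℝ (⊤ : ℕ∞) (uncurry f)) :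
    ContDiff ℝ (⊤ : ℕ∞) (uncurry (pdt f)) := by
  have h : uncurry (pdt f) = fun p : ℝ × ℝ => fderiv ℝ (uncurry f) p ((0 : ℝ), (1 : ℝ)) := by
    ext ⟨x, t⟩; exact pdt_eq hf x t
  rw [h]
  exact (hf.fderiv_right (by simp)).clm_apply contDiff_const

lemma smooth_pdx {f : ℝ → ℝ → ℝ} (hf : ContDiff ℝ (⊤ : ℕ∞) (uncurry f)) :
    ContDiff ℝ (⊤ : ℕ∞) (uncurry (pdx f)) := by
  have h : uncurry (pdx f) = fun p : ℝ × ℝ => fderiv ℝ (uncurry f) p ((1 : ℝ), (0 : ℝ)) := by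
    ext ⟨x, t⟩; exact pdx_eq hf x t
  rw [h]
  exact (hf.fderiv_right (by simp)).clm_apply contDiff_const

lemma clairaut {f : ℝ → ℝ → ℝ} (hf : ContDiff ℝ (⊤ : ℕ∞) (uncurry f)) (x t : ℝ) :
    pdx (pdt f) x t = pdt (pdx f) x t := by
  have hd2 : HasFDerivAt (fderiv ℝ (uncurry f))
      (fderiv ℝ (fderiv ℝ (uncurry f)) (x, t)) (x, t) :=
    (((hf.fderiv_right (m := 1) (WithTop.coe_le_coe.mpr le_top)).differentiable one_ne_zero) (x, t)).hasFDerivAt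
  have hsymm := second_derivative_symmetric
    (fun p => ((hf.differentiable (by simp)) p).hasFDerivAt) hd2
  have e1 : uncurry (pdt f) = fun p : ℝ × ℝ =>
      (ContinuousLinearMap.apply ℝ ℝ ((0 : ℝ), (1 : ℝ))) (fderiv ℝ (uncurry f) p) := by
    ext ⟨a, b⟩; exact pdt_eq hf a b
  have e2 : uncurry (pdx f) = fun p : ℝ × ℝ =>
      (ContinuousLinearMap.apply ℝ ℝ ((1 : ℝ), (0 : ℝ))) (fderiv ℝ (uncurry f) p) := by
    ext ⟨a, b⟩; exact pdx_eq hf a b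
  have h1 : HasFDerivAt (uncurry (pdt f))
      ((ContinuousLinearMap.apply ℝ ℝ ((0 : ℝ), (1 : ℝ))).comp
        (fderiv ℝ (fderiv ℝ (uncurry f)) (x, t))) (x, t) := by
    rw [e1]
    exact (ContinuousLinearMap.apply ℝ ℝ ((0 : ℝ), (1 : ℝ))).hasFDerivAt.comp (x, t) hd2
  have h2 : HasFDerivAt (uncurry (pdx f))
      ((ContinuousLinearMap.apply ℝ ℝ ((1 : ℝ), (0 : ℝ))).comp
        (fderiv ℝ (fderiv ℝ (uncurry f)) (x, t))) (x, t) := by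
    rw [e2]
    exact (ContinuousLinearMap.apply ℝ ℝ ((1 : ℝ), (0 : ℝ))).hasFDerivAt.comp (x, t) hd2
  have k1 : pdx (pdt f) x t = fderiv ℝ (fderiv ℝ (uncurry f)) (x, t) (1, 0) (0, 1) := by
    rw [pdx_eq (smooth_pdt hf) x t, h1.fderiv]; simp
  have k2 : pdt (pdx f) x t = fderiv ℝ (fderiv ℝ (uncurry f)) (x, t) (0, 1) (1, 0) := by
    rw [pdt_eq (smooth_pdx hf) x t, h2.fderiv]; simp
  rw [k1, k2]
  exact hsymm _ _

lemma pdw_t {ε c1 c2 : ℝ} {u w : ℝ → ℝ → ℝ} (hu : ContDiff ℝ (⊤ : ℕ∞) (uncurry u))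
    (hw : ∀ x t : ℝ, w x t = (c1 + ε * (c1 * t + c2)) * u x t) (x s : ℝ) :
    pdt w x s = ε * c1 * u x s + (c1 + ε * (c1 * s + c2)) * pdt u x s := by
  have hA : HasDerivAt (fun r : ℝ => c1 + ε * (c1 * r + c2)) (ε * c1) s := by
    simpa using ((((hasDerivAt_id s).const_mul c1).add_const c2).const_mul ε).const_add c1
  have hU : HasDerivAt (fun r => u x r) (pdt u x s) s := (sectt hu x s).hasDerivAt
  have h : (fun r => w x r) = fun r => (c1 + ε * (c1 * r + c2)) * u x r := by
    funext r; rw [hw]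
  show deriv (fun r => w x r) s = _
  rw [h]
  exact (hA.mul hU).deriv

lemma pdw_x {ε c1 c2 : ℝ} {u w : ℝ → ℝ → ℝ} (hu : ContDiff ℝ (⊤ : ℕ∞) (uncurry u))
    (hw : ∀ x t : ℝ, w x t = (c1 + ε * (c1 * t + c2)) * u x t) (x s : ℝ) :
    pdx w x s = (c1 + ε * (c1 * s + c2)) * pdx u x s := by
  have hU : HasDerivAt (fun y => u y s) (pdx u x s) x := (sectx hu x s).hasDerivAt
  have h : (fun y => w y s) = fun y => (c1 + ε * (c1 * s + c2)) * u y s := by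
    funext y; rw [hw]
  show deriv (fun y => w y s) x = _
  rw [h]
  exact (hU.const_mul _).deriv

/-- For a solution `u` of the damped wave equation `u_tt − u_xx + ε·u_t = 0` and the
substitution `w = (c1 + ε(c1·t + c2))·u`, the vector
`T^t = u_t·w_t + u_x·w_x + (1/2)ε(u·w_t − u_t·w)`,
`T^x = −u_t·w_x − u_x·w_t + (1/2)ε(u_x·w − u·w_x)`
satisfies `D_t(T^t) + D_x(T^x) = −2ε²(c1·t + c2)·u_t²`, hence is a first-order
approximate conserved vector of the damped wave equation. -/
theorem stmt12 (ε c1 c2 : ℝ) (u : ℝ → ℝ → ℝ)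
    (hu : ContDiff ℝ (⊤ : ℕ∞) (Function.uncurry u))
    (hpde : ∀ x t : ℝ, pdt (pdt u) x t - pdx (pdx u) x t + ε * pdt u x t = 0)
    (w : ℝ → ℝ → ℝ)
    (hw : ∀ x t : ℝ, w x t = (c1 + ε * (c1 * t + c2)) * u x t)
    (Tt Tx : ℝ → ℝ → ℝ)
    (hTt : ∀ x t : ℝ,
      Tt x t = pdt u x t * pdt w x t + pdx u x t * pdx w x t
        + (1/2) * ε * (u x t * pdt w x t - pdt u x t * w x t))
    (hTx : ∀ x t : ℝ,
      Tx x t = -(pdt u x t * pdx w x t) - pdx u x t * pdt w x t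
        + (1/2) * ε * (pdx u x t * w x t - u x t * pdx w x t)) :
    ∀ x t : ℝ,
      pdt Tt x t + pdx Tx x t = -2 * ε ^ 2 * (c1 * t + c2) * (pdt u x t) ^ 2 := by
  intro x t
  have hTt' : (fun s => Tt x s) = fun s =>
      (ε * c1) * (u x s * pdt u x s)
      + (c1 + ε * (c1 * s + c2)) * (pdt u x s * pdt u x s + pdx u x s * pdx u x s)
      + ((1/2) * ε ^ 2 * c1) * (u x s * u x s) := by
    funext s
    rw [hTt, hw, pdw_t hu hw, pdw_x hu hw]
    ring
  have hTx' : (fun y => Tx y t) = fun y =>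
      -((2 * (c1 + ε * (c1 * t + c2))) * (pdt u y t * pdx u y t))
      - (ε * c1) * (u y t * pdx u y t) := by
    funext y
    rw [hTx, hw, pdw_t hu hw, pdw_x hu hw]
    ring
  have hA : HasDerivAt (fun s : ℝ => c1 + ε * (c1 * s + c2)) (ε * c1) t := by
    simpa using ((((hasDerivAt_id t).const_mul c1).add_const c2).const_mul ε).const_add c1
  have hU : HasDerivAt (fun s => u x s) (pdt u x t) t := (sectt hu x t).hasDerivAt
  have hUt : HasDerivAt (fun s => pdt u x s) (pdt (pdt u) x t) t :=
    (sectt (smooth_pdt hu) x t).hasDerivAt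
  have hUx : HasDerivAt (fun s => pdx u x s) (pdt (pdx u) x t) t :=
    (sectt (smooth_pdx hu) x t).hasDerivAt
  have hV : HasDerivAt (fun y => u y t) (pdx u x t) x := (sectx hu x t).hasDerivAt
  have hVt : HasDerivAt (fun y => pdt u y t) (pdx (pdt u) x t) x :=
    (sectx (smooth_pdt hu) x t).hasDerivAt
  have hVx : HasDerivAt (fun y => pdx u y t) (pdx (pdx u) x t) x :=
    (sectx (smooth_pdx hu) x t).hasDerivAt
  have H1 := (((hU.mul hUt).const_mul (ε * c1)).add
      (hA.mul ((hUt.mul hUt).add (hUx.mul hUx)))).add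
      ((hU.mul hU).const_mul ((1/2) * ε ^ 2 * c1))
  have H2 := (((hVt.mul hVx).const_mul (2 * (c1 + ε * (c1 * t + c2)))).neg).sub
      ((hV.mul hVx).const_mul (ε * c1))
  show deriv (fun s => Tt x s) t + deriv (fun y => Tx y t) x = _
  rw [hTt', hTx', (show HasDerivAt (fun s => ε * c1 * (u x s * pdt u x s) + (c1 + ε * (c1 * s + c2)) * (pdt u x s * pdt u x s + pdx u x s * pdx u x s) + 1 / 2 * ε ^ 2 * c1 * (u x s * u x s)) _ t from H1).deriv,
    (show HasDerivAt (fun y => -(2 * (c1 + ε * (c1 * t + c2)) * (pdt u y t * pdx u y t)) - ε * c1 * (u y t * pdx u y t)) _ x from H2).deriv, clairaut hu x t]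
  simp only [Pi.mul_apply, Pi.add_apply]
  linear_combination (ε * c1 * u x t + 2 * (c1 + ε * (c1 * t + c2)) * pdt u x t) * hpde x t
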